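/- Let (R, m) be a local Gaussian ring whose maximal ideal m coincides with the nilradical of R, and let λ ∈ m. If m is not nilpotent, then there exists z ∈ m such that deg(z) > deg(λ), where deg(r) denotes the nilpotency degree of r, i.e. the smallest k ∈ ℕ with r^k = 0. -/

import Mathlib

open CategoryTheory Polynomial

universe u

noncomputable section

/-- The content of a polynomial: the ideal generated by its coefficients. -/
def contentIdeal {R : Type u} [CommRing R] (f : R[X]) : Ideal R :=
  Ideal.span (Set.range f.coeff)

/-- A commutative ring is Gaussian if `c(fg) = c(f)c(g)` for all polynomials `f, g`. -/
def IsGaussian (R : Type u) [CommRing R] : Prop :=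
  ∀ f g : R[X], _root_.contentIdeal (f * g) = _root_.contentIdeal f * _root_.contentIdeal g

/-- `Tor_n^R(A, B)` as a module, via the left derived functor of the tensor product. -/
abbrev TorM (R : Type u) [CommRing R] (n : ℕ) (A B : ModuleCat.{u} R) : ModuleCat.{u} R :=
  ((Tor (ModuleCat.{u} R) n).obj A).obj B

/-- The flat (weak) dimension of a module `M`:
`sup {d : Tor_d(A, M) ≠ 0 for some A}`, as an element of `ℕ∞`. -/
def wgdModule (R : Type u) [CommRing R] (M : ModuleCat.{u} R) : ℕ∞ :=
  sSup ((↑) '' {d : ℕ | ∃ A : ModuleCat.{u} R, Nontrivial (TorM R d A M)})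

/-- The weak global dimension of a ring `R`:
`sup {d : Tor_d(A, B) ≠ 0 for some modules A, B}`, as an element of `ℕ∞`. -/
def wgd (R : Type u) [CommRing R] : ℕ∞ :=
  sSup ((↑) '' {d : ℕ | ∃ A B : ModuleCat.{u} R, Nontrivial (TorM R d A B)})

/-- The nilpotency degree of an element: the smallest `k` with `r ^ k = 0`. -/
def nilDeg {R : Type u} [CommRing R] (r : R) : ℕ :=
  sInf {k : ℕ | r ^ k = 0}

/-! In a Gaussian ring, comparing contents in `(aX + b)(aX - b) = a²X² - b²` gives
`ab ∈ (a², b²)`. Iterating, `I ^ (2 ^ j)` is generated by the `2 ^ j`-th powers of elements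
of `I`. If no element of the maximal ideal `m` had nilpotency degree larger than `deg λ`, all
`2 ^ j`-th powers of elements of `m` would vanish once `2 ^ j > deg λ`, so `m ^ (2 ^ j) = 0`. -/

section

variable {R : Type u} [CommRing R]

lemma contentIdeal_le_iff {f : R[X]} {I : Ideal R} :
    _root_.contentIdeal f ≤ I ↔ ∀ n, f.coeff n ∈ I := by
  rw [_root_.contentIdeal, Ideal.span_le, Set.range_subset_iff]
  rfl

lemma IsGaussian.mul_mem_span_sq (hR : IsGaussian R) (a b : R) :
    a * b ∈ Ideal.span {a ^ 2, b ^ 2} := by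
  have ha : a ∈ _root_.contentIdeal (C a * X + C b) := Ideal.subset_span ⟨1, by simp⟩
  have hb : -b ∈ _root_.contentIdeal (C a * X - C b) := Ideal.subset_span ⟨0, by simp⟩
  have hprod := Ideal.mul_mem_mul ha hb
  rw [← hR, show (C a * X + C b) * (C a * X - C b) = C (a ^ 2) * X ^ 2 - C (b ^ 2) by
    simp only [C_pow]; ring] at hprod
  have hcontent : _root_.contentIdeal (C (a ^ 2) * X ^ 2 - C (b ^ 2)) ≤
      Ideal.span {a ^ 2, b ^ 2} := by
    rw [contentIdeal_le_iff]
    intro n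
    simp only [coeff_sub, coeff_C_mul, coeff_X_pow, coeff_C, mul_ite, mul_one, mul_zero]
    have ha2 : a ^ 2 ∈ Ideal.span {a ^ 2, b ^ 2} := Ideal.subset_span (by simp)
    have hb2 : b ^ 2 ∈ Ideal.span {a ^ 2, b ^ 2} := Ideal.subset_span (by simp)
    split_ifs <;> simp_all [neg_mem_iff]
  simpa using neg_mem (hcontent hprod)

lemma IsGaussian.pow_two_pow_le_span (hR : IsGaussian R) (I : Ideal R) (j : ℕ) :
    I ^ (2 ^ j) ≤ Ideal.span ((· ^ (2 ^ j)) '' (I : Set R)) := by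
  induction j with
  | zero => simp
  | succ j ih =>
    rw [pow_succ, pow_mul, sq]
    refine (Ideal.mul_mono ih ih).trans ?_
    rw [Ideal.span_mul_span, Ideal.span_le, Set.mul_subset_iff]
    rintro _ ⟨x, hx, rfl⟩ _ ⟨y, hy, rfl⟩
    have hxy := hR.mul_mem_span_sq (x ^ 2 ^ j) (y ^ 2 ^ j)
    simp only [← pow_mul, ← pow_succ] at hxy
    refine Ideal.span_mono ?_ hxy
    rintro _ (rfl | rfl)
    exacts [⟨x, hx, rfl⟩, ⟨y, hy, rfl⟩]

lemma IsGaussian.isNilpotent_of_forall_pow_eq_zero (hR : IsGaussian R) {I : Ideal R} (N : ℕ)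
    (hI : ∀ x ∈ I, x ^ N = 0) : IsNilpotent I := by
  obtain ⟨j, hj⟩ : ∃ j, N ≤ 2 ^ j := ⟨N, Nat.lt_two_pow_self.le⟩
  refine ⟨2 ^ j, le_bot_iff.mp <| (hR.pow_two_pow_le_span I j).trans ?_⟩
  rw [Ideal.span_le]
  rintro _ ⟨x, hx, rfl⟩
  simp [pow_eq_zero_of_le hj (hI x hx)]

lemma IsNilpotent.pow_nilDeg {x : R} (hx : IsNilpotent x) : x ^ nilDeg x = 0 :=
  Nat.sInf_mem hx

end

theorem exists_nilDeg_gt_general (R : Type u) [CommRing R] [IsLocalRing R] (hR : IsGaussian R)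
    (hm : IsLocalRing.maximalIdeal R = nilradical R)
    (hnil : ¬ IsNilpotent (IsLocalRing.maximalIdeal R))
    (lam : R) :
    ∃ z ∈ IsLocalRing.maximalIdeal R, nilDeg lam < nilDeg z := by
  by_contra! hle
  refine hnil (hR.isNilpotent_of_forall_pow_eq_zero (nilDeg lam) fun x hx => ?_)
  have hx_nil : IsNilpotent x := by rwa [hm] at hx
  exact pow_eq_zero_of_le (hle x hx) hx_nil.pow_nilDeg

/-- In a local Gaussian ring whose maximal ideal is the nilradical and is not nilpotent,
for every `λ` in the maximal ideal there is an element of strictly larger nilpotency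
degree. -/
theorem exists_nilDeg_gt (R : Type u) [CommRing R] [IsLocalRing R] (hR : IsGaussian R)
    (hm : IsLocalRing.maximalIdeal R = nilradical R)
    (hnil : ¬ IsNilpotent (IsLocalRing.maximalIdeal R))
    (lam : R) (hlam : lam ∈ IsLocalRing.maximalIdeal R) :
    ∃ z ∈ IsLocalRing.maximalIdeal R, nilDeg lam < nilDeg z :=
  exists_nilDeg_gt_general R hR hm hnil lam
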